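/- arXiv:2006.15307 — 2 statements merged into one kernel-verified Lean document; each statement's English description precedes it below -/
import Mathlib

section
/- The set F_y of y-smooth numbers (for increasing y with y(n) ≥ 2) is m-reducible; indeed F_y = F_y · F_y, and moreover F_y is asymptotically equal to F_y · {1, 2}. -/
/-! The smooth numbers form a multiplicative monoid: a prime factor of `a * b` divides `a` or `b`,
and is bounded by `y a` or `y b`, hence by `y (a * b)` since `y` is increasing. A submonoid `S` absorbs
any `T` with `1 ∈ T ⊆ S`, that is `S * T = S`; this gives both `F_y = F_y · F_y` and `F_y = F_y · {1, 2}`. -/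

open Pointwise

def SmoothSet (y : ℕ → ℝ) : Set ℕ :=
  {n : ℕ | 0 < n ∧ ∀ p : ℕ, p.Prime → p ∣ n → (p : ℝ) ≤ y n}

theorem Submonoid.coe_mul_eq_of_one_mem_of_subset {M : Type*} [Monoid M] (S : Submonoid M)
    {T : Set M} (h1 : (1 : M) ∈ T) (hT : T ⊆ S) : (S : Set M) * T = S :=
  (Submonoid.mul_subset subset_rfl hT).antisymm (Set.subset_mul_left _ h1)

section SmoothSet

variable {y : ℕ → ℝ}

theorem one_mem_smoothSet (y : ℕ → ℝ) : 1 ∈ SmoothSet y :=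
  ⟨one_pos, fun _ hp hp1 => absurd (Nat.eq_one_of_dvd_one hp1 ▸ hp) Nat.not_prime_one⟩

theorem two_mem_smoothSet (h2 : 2 ≤ y 2) : 2 ∈ SmoothSet y := by
  refine ⟨two_pos, fun p hp hp2 => ?_⟩
  rw [(Nat.prime_dvd_prime_iff_eq hp Nat.prime_two).mp hp2]
  exact_mod_cast h2

theorem mul_mem_smoothSet (hmono : Monotone y) {a b : ℕ} (ha : a ∈ SmoothSet y)
    (hb : b ∈ SmoothSet y) : a * b ∈ SmoothSet y := by
  refine ⟨Nat.mul_pos ha.1 hb.1, fun p hp hpab => ?_⟩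
  rcases hp.dvd_mul.mp hpab with hpa | hpb
  · exact (ha.2 p hp hpa).trans (hmono (Nat.le_mul_of_pos_right a hb.1))
  · exact (hb.2 p hp hpb).trans (hmono (Nat.le_mul_of_pos_left b ha.1))

def smoothSubmonoid (hmono : Monotone y) : Submonoid ℕ where
  carrier := SmoothSet y
  mul_mem' := mul_mem_smoothSet hmono
  one_mem' := one_mem_smoothSet y

@[simp]
theorem coe_smoothSubmonoid (hmono : Monotone y) : (smoothSubmonoid hmono : Set ℕ) = SmoothSet y :=
  rfl

end SmoothSet

theorem stmt_13 (y : ℕ → ℝ) (hmono : Monotone y) (hy : ∀ n, 2 ≤ y n) :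
    SmoothSet y = SmoothSet y * SmoothSet y ∧
    (SmoothSet y).Nontrivial ∧
    (∃ K : ℕ, SmoothSet y ∩ Set.Ici K =
      (SmoothSet y * ({1, 2} : Set ℕ)) ∩ Set.Ici K) := by
  have htwo : 2 ∈ SmoothSet y := two_mem_smoothSet (hy 2)
  have hsq : SmoothSet y * SmoothSet y = SmoothSet y := by
    simpa using (smoothSubmonoid hmono).coe_mul_self_eq
  have hpair : SmoothSet y * ({1, 2} : Set ℕ) = SmoothSet y := by
    simpa using (smoothSubmonoid hmono).coe_mul_eq_of_one_mem_of_subset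
      (T := {1, 2}) (by simp)
      (Set.insert_subset_iff.mpr ⟨one_mem_smoothSet y, Set.singleton_subset_iff.mpr htwo⟩)
  exact ⟨hsq.symm, ⟨1, one_mem_smoothSet y, 2, htwo, by decide⟩, 0, by rw [hpair]⟩
end

section
/- For any function y with 2 ≤ y(N) and y(N) < 2^{-32} log N for large N, and any constant c > 0, the inequality c·Ψ(N, y(N))^{1/2} < 2^{8(2π(y(N))+2)} fails for all sufficiently large N; equivalently, Ψ(N, y(N))^{1/2} eventually dominates 2^{16π(y(N)) + 16} up to any fixed constant factor. -/
/-
Products `∏ p ^ e p` over the primes `p ≤ y` with `∑ e p ≤ T := ⌊log N / log y⌋` are `y`-smooth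
and at most `N`, so with `k = π(y)` we get `Ψ(N, y) ≥ C(T + k, k) ≥ (log N / log y) ^ k / k!`.
If `y` stays bounded, so does `k`, while `log N / log y → ∞`. If `y` is large, Chebyshev's bound
`π(y) ≤ 2y / log y` and `y < 2⁻³² log N` give `log N / log y ≥ 2³² · k / 2`, hence
`Ψ(N, y) ≥ 2^(32k) · (k / 2) ^ k / k!`, and `(k / 2) ^ k / k! → ∞` by Stirling since `2 < e`.
-/

noncomputable def Psi (x y : ℝ) : ℕ :=
  {n : ℕ | 1 ≤ n ∧ (n : ℝ) ≤ x ∧ ∀ p : ℕ, p.Prime → p ∣ n → (p : ℝ) ≤ y}.ncard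

open Filter Real
open Nat (primeCounting)
open scoped Nat

theorem factorization_prod_pow_of_prime {P : Finset ℕ} (hP : ∀ p ∈ P, p.Prime) (e : P → ℕ)
    (q : P) : (∏ p : P, (p : ℕ) ^ e p).factorization q = e q := by
  rw [Nat.factorization_prod fun (p : P) _ => pow_ne_zero _ (hP p p.2).ne_zero,
    Finsupp.finsetSum_apply]
  simp [(hP _ _).factorization_pow, Finsupp.single_apply]

theorem prod_pow_injective_of_prime {P : Finset ℕ} (hP : ∀ p ∈ P, p.Prime) :
    Function.Injective fun e : P → ℕ => ∏ p : P, (p : ℕ) ^ e p := fun e e' h =>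
  funext fun q => by
    rw [← factorization_prod_pow_of_prime hP e q, ← factorization_prod_pow_of_prime hP e' q]
    exact congrArg (fun n => n.factorization q) h

namespace Sym

variable {α : Type*} [Fintype α] [DecidableEq α] {n : ℕ}

theorem count_none_add_sum_count_some (s : Sym (Option α) n) :
    (s : Multiset (Option α)).count none + ∑ a, (s : Multiset (Option α)).count (some a) = n := by
  rw [← Fintype.sum_option fun o => (s : Multiset (Option α)).count o,
    Multiset.sum_count_eq_card fun _ _ => Finset.mem_univ _, s.card_coe]

theorem count_some_injective :
    Function.Injective fun (s : Sym (Option α) n) (a : α) =>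
      (s : Multiset (Option α)).count (some a) := by
  intro s t h
  refine Sym.coe_injective (Multiset.ext.2 fun o => ?_)
  cases o with
  | none =>
    have hs := count_none_add_sum_count_some s
    have ht := count_none_add_sum_count_some t
    simp only at h
    rw [h] at hs
    omega
  | some a => exact congrFun h a

end Sym

theorem choose_le_Psi {x y : ℝ} (hy : 1 ≤ y) {T : ℕ} (hT : y ^ T ≤ x) :
    (T + primeCounting ⌊y⌋₊).choose T ≤ Psi x y := by
  classical
  set P := Nat.primesLE ⌊y⌋₊
  have hP : ∀ p ∈ P, p.Prime := fun _ => Nat.prime_of_mem_primesLE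
  have hPy : ∀ p ∈ P, (p : ℝ) ≤ y := fun p hp =>
    (Nat.le_floor_iff (by linarith)).1 (Nat.le_of_mem_primesLE hp)
  -- `none` pads a multiset of fewer than `T` primes up to size `T`.
  let g : Sym (Option P) T → ℕ := fun s => ∏ p : P, (p : ℕ) ^ (s : Multiset _).count (some p)
  have hcard : Nat.card (Sym (Option P) T) = (T + primeCounting ⌊y⌋₊).choose T := by
    rw [Nat.card_eq_fintype_card, Sym.card_sym_eq_choose, Fintype.card_option, Fintype.card_coe,
      Nat.primesLE_card_eq_primeCounting, Nat.add_right_comm, Nat.add_sub_cancel, add_comm]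
  rw [← hcard, ← Set.ncard_univ]
  refine Set.ncard_le_ncard_of_injOn g (fun s _ => ⟨?_, ?_, ?_⟩)
    ((prod_pow_injective_of_prime hP).comp Sym.count_some_injective).injOn
    ((Set.finite_Icc 1 ⌊x⌋₊).subset fun n hn => ⟨hn.1, Nat.le_floor hn.2.1⟩)
  · exact Finset.one_le_prod' fun p _ => Nat.one_le_pow _ _ (hP p p.2).pos
  · calc ((g s : ℕ) : ℝ) = ∏ p : P, (p : ℝ) ^ (s : Multiset _).count (some p) := by
          simp [g]
      _ ≤ ∏ p : P, y ^ (s : Multiset _).count (some p) :=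
          Finset.prod_le_prod (fun _ _ => by positivity) fun p _ => by gcongr; exact hPy p p.2
      _ = y ^ ∑ p : P, (s : Multiset _).count (some p) := Finset.prod_pow_eq_pow_sum _ _ _
      _ ≤ y ^ T := pow_le_pow_right₀ hy (by have := Sym.count_none_add_sum_count_some s; omega)
      _ ≤ x := hT
  · intro q hq hdvd
    obtain ⟨p, -, hqp⟩ := (hq.prime.dvd_finsetProd_iff _).1 hdvd
    rw [(Nat.prime_dvd_prime_iff_eq hq (hP p p.2)).1 (hq.dvd_of_dvd_pow hqp)]
    exact hPy p p.2

theorem factorial_le_exp_one_mul_sqrt_mul_pow {n : ℕ} (hn : n ≠ 0) :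
    (n ! : ℝ) ≤ exp 1 * √n * (n / exp 1) ^ n := by
  have h := Stirling.stirlingSeq'_antitone (Nat.zero_le (n - 1))
  simp only [Function.comp_apply, Nat.succ_eq_add_one, zero_add,
    Nat.sub_add_cancel (Nat.one_le_iff_ne_zero.2 hn)] at h
  rw [Stirling.stirlingSeq_one, Stirling.stirlingSeq] at h
  have hpos : 0 < √(2 * n : ℝ) * (n / exp 1) ^ n := by
    have : (0 : ℝ) < n := by exact_mod_cast Nat.pos_of_ne_zero hn
    positivity
  rw [div_le_iff₀ hpos] at h
  calc (n ! : ℝ) ≤ exp 1 / √2 * (√(2 * n : ℝ) * (n / exp 1) ^ n) := h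
    _ = exp 1 * √n * (n / exp 1) ^ n := by
      rw [Real.sqrt_mul (by norm_num)]; field_simp

theorem tendsto_div_pow_div_factorial_atTop {r : ℝ} (hr₀ : 0 < r) (hr : r < exp 1) :
    Tendsto (fun k : ℕ => (k / r : ℝ) ^ k / k !) atTop atTop := by
  have hb : 0 < 1 - log r := by
    rw [sub_pos, ← log_exp 1]; exact log_lt_log hr₀ hr
  -- By Stirling, `(k / r) ^ k / k! ≥ (e / r) ^ k / (e √k) = e⁻¹ · exp ((1 - log r) k) / √k`.
  have key := ((tendsto_exp_mul_div_rpow_atTop (1 / 2) _ hb).comp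
    tendsto_natCast_atTop_atTop).const_mul_atTop (inv_pos.2 (exp_pos 1))
  refine tendsto_atTop_mono' _ ?_ key
  filter_upwards [eventually_ne_atTop 0] with k hk
  have hk₀ : (0 : ℝ) < k := by exact_mod_cast Nat.pos_of_ne_zero hk
  have hexp : exp ((1 - log r) * k) = (exp 1 / r) ^ k := by
    rw [sub_mul, one_mul, exp_sub, mul_comm (log r), exp_nat_mul, exp_log hr₀, div_pow,
      ← exp_nat_mul, mul_one]
  simp only [Function.comp_apply, hexp, ← sqrt_eq_rpow]
  rw [le_div_iff₀ (by positivity)]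
  calc (exp 1)⁻¹ * ((exp 1 / r) ^ k / √k) * k !
      ≤ (exp 1)⁻¹ * ((exp 1 / r) ^ k / √k) * (exp 1 * √k * (k / exp 1) ^ k) := by
        gcongr; exact factorial_le_exp_one_mul_sqrt_mul_pow hk
    _ = (exp 1 / r * (k / exp 1)) ^ k := by
        rw [mul_pow]; field_simp
    _ = (k / r) ^ k := by
        congr 1; field_simp

theorem pow_div_factorial_le_Psi {x y : ℝ} (hx : 1 ≤ x) (hy : 1 < y) :
    (log x / log y) ^ primeCounting ⌊y⌋₊ / (primeCounting ⌊y⌋₊)! ≤ Psi x y := by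
  set k := primeCounting ⌊y⌋₊
  have hZ : 0 ≤ log x / log y := div_nonneg (log_nonneg hx) (log_pos hy).le
  set T := ⌊log x / log y⌋₊
  have hT : y ^ T ≤ x := by
    rw [pow_le_iff_le_log (by linarith) (by linarith), ← le_div_iff₀ (log_pos hy)]
    exact Nat.floor_le hZ
  calc (log x / log y) ^ k / k ! ≤ ((T + k + 1 - k : ℕ) : ℝ) ^ k / k ! := by
        rw [Nat.add_right_comm, Nat.add_sub_cancel]
        gcongr
        exact_mod_cast (Nat.lt_floor_add_one _).le
    _ ≤ (T + k).choose k := Nat.pow_le_choose k (T + k)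
    _ = (T + k).choose T := by rw [Nat.choose_symm_add]
    _ ≤ Psi x y := by exact_mod_cast choose_le_Psi hy.le hT

theorem two_pow_le_mul_sqrt_Psi {c x y : ℝ} (hc : 0 < c) (hx : 1 ≤ x) (hy : 1 < y)
    (h : (2 : ℝ) ^ (32 * (primeCounting ⌊y⌋₊ + 1)) * (primeCounting ⌊y⌋₊)! ≤
      c ^ 2 * (log x / log y) ^ primeCounting ⌊y⌋₊) :
    (2 : ℝ) ^ (8 * (2 * primeCounting ⌊y⌋₊ + 2)) ≤ c * √(Psi x y) := by
  set k := primeCounting ⌊y⌋₊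
  rw [← div_le_iff₀' hc, le_sqrt (by positivity) (by positivity)]
  calc ((2 : ℝ) ^ (8 * (2 * k + 2)) / c) ^ 2 = 2 ^ (32 * (k + 1)) * k ! / c ^ 2 / k ! := by
        field_simp; ring
    _ ≤ (log x / log y) ^ k / k ! := by gcongr; exact (div_le_iff₀' (by positivity)).2 h
    _ ≤ Psi x y := pow_div_factorial_le_Psi hx hy

theorem eventually_two_pow_mul_factorial_le_of_le {c : ℝ} (hc : 0 < c) (Y : ℝ) :
    ∀ᶠ N : ℕ in atTop, ∀ y, 2 ≤ y → y ≤ Y →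
      (2 : ℝ) ^ (32 * (primeCounting ⌊y⌋₊ + 1)) * (primeCounting ⌊y⌋₊)! ≤
        c ^ 2 * (log N / log y) ^ primeCounting ⌊y⌋₊ := by
  set K := primeCounting ⌊Y⌋₊
  set B := max 1 ((2 : ℝ) ^ (32 * (K + 1)) * K ! / c ^ 2)
  filter_upwards [(tendsto_log_atTop.comp tendsto_natCast_atTop_atTop).eventually_ge_atTop
    (B * log Y)] with N hN y hy hyY
  set k := primeCounting ⌊y⌋₊
  have hk : 1 ≤ k :=
    (show 1 = primeCounting 2 by decide).trans_le
      (Nat.monotone_primeCounting (Nat.le_floor (by exact_mod_cast hy)))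
  have hkK : k ≤ K := Nat.monotone_primeCounting (Nat.floor_le_floor hyY)
  have hlogy : 0 < log y := log_pos (by linarith)
  have hZ : B ≤ log N / log y := by
    rw [le_div_iff₀ hlogy]
    exact (mul_le_mul_of_nonneg_left (log_le_log (by linarith) hyY) (by positivity)).trans hN
  calc (2 : ℝ) ^ (32 * (k + 1)) * k ! ≤ 2 ^ (32 * (K + 1)) * K ! := by
        gcongr
        norm_num
    _ ≤ c ^ 2 * B := by rw [← div_le_iff₀' (by positivity)]; exact le_max_right _ _
    _ ≤ c ^ 2 * (log N / log y) := by gcongr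
    _ ≤ c ^ 2 * (log N / log y) ^ k := by
        gcongr; exact le_self_pow₀ ((le_max_left _ _).trans hZ) (by omega)

theorem eventually_primeCounting_le_two_mul_div_log :
    ∀ᶠ x : ℝ in atTop, (primeCounting ⌊x⌋₊ : ℝ) ≤ 2 * x / log x := by
  have hlog4 : log 4 < 2 := by
    rw [show (4 : ℝ) = 2 ^ 2 by norm_num, log_pow]
    push_cast
    linarith [log_two_lt_d9]
  simpa using Chebyshev.eventually_primeCounting_le (sub_pos.2 hlog4)

theorem exists_two_pow_mul_factorial_le_of_ge {c : ℝ} (hc : 0 < c) :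
    ∃ Y, ∀ y ≥ Y, ∀ L, 2 ^ 32 * y ≤ L →
      (2 : ℝ) ^ (32 * (primeCounting ⌊y⌋₊ + 1)) * (primeCounting ⌊y⌋₊)! ≤
        c ^ 2 * (L / log y) ^ primeCounting ⌊y⌋₊ := by
  have hfact := (tendsto_div_pow_div_factorial_atTop two_pos
    (by linarith [exp_one_gt_d9])).eventually_ge_atTop (2 ^ 32 / c ^ 2)
  obtain ⟨Y, hY⟩ := eventually_atTop.1
    (((Nat.tendsto_primeCounting.comp tendsto_nat_floor_atTop).eventually hfact).and
      (eventually_primeCounting_le_two_mul_div_log.and (eventually_gt_atTop 1)))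
  refine ⟨Y, fun y hy L hL => ?_⟩
  obtain ⟨hfac, hπ, hy1⟩ := hY y hy
  set k := primeCounting ⌊y⌋₊
  have hlogy : 0 < log y := log_pos hy1
  have hZ : 2 ^ 32 * (k / 2) ≤ L / log y := by
    calc (2 : ℝ) ^ 32 * (k / 2) ≤ 2 ^ 32 * (2 * y / log y / 2) := by gcongr
      _ = 2 ^ 32 * y / log y := by ring
      _ ≤ L / log y := by gcongr
  rw [Function.comp_apply, div_le_div_iff₀ (by positivity) (by positivity)] at hfac
  calc (2 : ℝ) ^ (32 * (k + 1)) * k ! = (2 ^ 32) ^ k * (2 ^ 32 * k !) := by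
        rw [pow_mul, pow_succ]; ring
    _ ≤ (2 ^ 32) ^ k * (c ^ 2 * (k / 2) ^ k) :=
        mul_le_mul_of_nonneg_left (by linarith) (by positivity)
    _ = c ^ 2 * (2 ^ 32 * (k / 2)) ^ k := by rw [mul_pow]; ring
    _ ≤ c ^ 2 * (L / log y) ^ k := by gcongr

theorem stmt_17 (y : ℕ → ℝ) (h2 : ∀ N, 2 ≤ y N)
    (hupper : ∀ᶠ N : ℕ in Filter.atTop, y N < 2 ^ (-32 : ℤ) * Real.log N)
    (c : ℝ) (hc : 0 < c) :
    ∀ᶠ N : ℕ in Filter.atTop,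
      ¬ (c * Real.sqrt (Psi N (y N)) <
          (2 : ℝ) ^ (8 * (2 * Nat.primeCounting ⌊y N⌋₊ + 2))) := by
  obtain ⟨Y, hlarge⟩ := exists_two_pow_mul_factorial_le_of_ge hc
  filter_upwards [hupper, eventually_two_pow_mul_factorial_le_of_le hc Y, eventually_ge_atTop 1]
    with N hN hsmall hN1
  rw [not_lt]
  refine two_pow_le_mul_sqrt_Psi hc (by exact_mod_cast hN1) (by linarith [h2 N]) ?_
  rcases le_total (y N) Y with hle | hge
  · exact hsmall (y N) (h2 N) hle
  · refine hlarge (y N) hge _ ?_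
    norm_num at hN
    linarith
end
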